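/- arXiv:1704.08184 — 2 statements merged into one kernel-verified Lean document; each statement's English description precedes it below -/
import Mathlib

section
/- Let ω be holomorphic on the open unit disk D with |ω(z)| ≤ 1 for all z ∈ D, let c ∈ ℂ, and set A(z) = 1 + c·z − z·∫₀ᶻ ω(t) dt (segment integral). Then for all z₁, z₂ ∈ D, |z₁·A(z₂) − z₂·A(z₁)| ≥ (1 − |z₁·z₂|)·|z₁ − z₂|. In particular, if z₁ ≠ z₂ then z₁·A(z₂) ≠ z₂·A(z₁), so the map z ↦ z/A(z) is injective on {z ∈ D : A(z) ≠ 0}. -/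
open Complex Metric

/-- Contour integral of `ω` along the straight line segment from `z₁` to `z₂`:
`∫_{z₁}^{z₂} ω(t) dt = (z₂ - z₁) ∫₀¹ ω(z₁ + s (z₂ - z₁)) ds`. -/
noncomputable def segInt (ω : ℂ → ℂ) (z₁ z₂ : ℂ) : ℂ :=
  (z₂ - z₁) * ∫ s in (0:ℝ)..(1:ℝ), ω (z₁ + (s : ℂ) * (z₂ - z₁))

/-!
By Morera's theorem `ω` has a primitive `F` on the disk, so `∫₀ᶻ ω = F z - F 0` and, as `‖F'‖ ≤ 1`,
`F` is 1-Lipschitz there. Since `z₁ A(z₂) - z₂ A(z₁) = (z₁ - z₂) - z₁ z₂ (F z₂ - F z₁)`, the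
triangle inequality gives the bound, which is positive when `z₁ ≠ z₂`.
-/

theorem segInt_eq_sub_of_hasDerivAt {ω F : ℂ → ℂ} {z₁ z₂ : ℂ}
    (hF : ∀ z ∈ segment ℝ z₁ z₂, HasDerivAt F (ω z) z)
    (hω : ContinuousOn ω (segment ℝ z₁ z₂)) :
    segInt ω z₁ z₂ = F z₂ - F z₁ := by
  set γ : ℝ → ℂ := fun s => z₁ + (s : ℂ) * (z₂ - z₁)
  have hγ : Set.MapsTo γ (Set.Icc 0 1) (segment ℝ z₁ z₂) := by
    intro s hs
    rw [segment_eq_image']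
    exact ⟨s, hs, by simp [γ, Complex.real_smul]⟩
  have hγ_cont : Continuous γ := by fun_prop
  have hderiv : ∀ s ∈ Set.uIcc (0 : ℝ) 1,
      HasDerivAt (fun s => F (γ s)) ((z₂ - z₁) * ω (γ s)) s := by
    intro s hs
    rw [Set.uIcc_of_le zero_le_one] at hs
    have hlin : HasDerivAt (fun w : ℂ => z₁ + w * (z₂ - z₁)) (z₂ - z₁) (s : ℂ) := by
      simpa using ((hasDerivAt_id (s : ℂ)).mul_const (z₂ - z₁)).const_add z₁
    rw [mul_comm]
    exact ((hF _ (hγ hs)).comp (s : ℂ) hlin).comp_ofReal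
  have hint : IntervalIntegrable (fun s => (z₂ - z₁) * ω (γ s)) MeasureTheory.volume 0 1 := by
    refine ContinuousOn.intervalIntegrable ?_
    rw [Set.uIcc_of_le zero_le_one]
    exact continuousOn_const.mul (hω.comp hγ_cont.continuousOn hγ)
  rw [segInt, ← intervalIntegral.integral_const_mul,
    intervalIntegral.integral_eq_sub_of_hasDerivAt hderiv hint]
  simp [γ]

theorem norm_segInt_sub_segInt_le {ω : ℂ → ℂ} {a z₀ z₁ z₂ : ℂ} {r C : ℝ}
    (hω : DifferentiableOn ℂ ω (ball a r)) (hbd : ∀ z ∈ ball a r, ‖ω z‖ ≤ C)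
    (hz₀ : z₀ ∈ ball a r) (hz₁ : z₁ ∈ ball a r) (hz₂ : z₂ ∈ ball a r) :
    ‖segInt ω z₀ z₂ - segInt ω z₀ z₁‖ ≤ C * ‖z₂ - z₁‖ := by
  obtain ⟨F, hF⟩ := hω.isExactOn_ball
  have hsegInt : ∀ z ∈ ball a r, segInt ω z₀ z = F z - F z₀ := fun z hz =>
    have hseg := (convex_ball a r).segment_subset hz₀ hz
    segInt_eq_sub_of_hasDerivAt (fun w hw => hF w (hseg hw)) (hω.continuousOn.mono hseg)
  rw [hsegInt z₁ hz₁, hsegInt z₂ hz₂, sub_sub_sub_cancel_right]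
  exact (convex_ball a r).norm_image_sub_le_of_norm_hasDerivWithin_le
    (fun z hz => (hF z hz).hasDerivWithinAt) hbd hz₁ hz₂

theorem mul_norm_sub_le_norm_sub_mul_sub {z₁ z₂ w : ℂ} (hw : ‖w‖ ≤ ‖z₁ - z₂‖) :
    (1 - ‖z₁ * z₂‖) * ‖z₁ - z₂‖ ≤ ‖z₁ - z₂ - z₁ * z₂ * w‖ :=
  calc (1 - ‖z₁ * z₂‖) * ‖z₁ - z₂‖ = ‖z₁ - z₂‖ - ‖z₁ * z₂‖ * ‖z₁ - z₂‖ := by ring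
    _ ≤ ‖z₁ - z₂‖ - ‖z₁ * z₂ * w‖ := by
      rw [norm_mul (z₁ * z₂)]; gcongr
    _ ≤ ‖z₁ - z₂ - z₁ * z₂ * w‖ := norm_sub_norm_le _ _

/-- For `A(z) = 1 + c z - z ∫₀ᶻ ω(t) dt` with `|ω| ≤ 1` on the unit disk:
`|z₁ A(z₂) - z₂ A(z₁)| ≥ (1 - |z₁ z₂|) |z₁ - z₂|` for `z₁, z₂` in the disk,
so (for `z₁ ≠ z₂` we get `z₁ A(z₂) ≠ z₂ A(z₁)`) the map `z ↦ z / A(z)` is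
injective off the zeros of `A`. -/
theorem stmt_4 (ω : ℂ → ℂ) (c : ℂ)
    (hω : DifferentiableOn ℂ ω (ball (0 : ℂ) 1))
    (hbd : ∀ z ∈ ball (0 : ℂ) 1, ‖ω z‖ ≤ 1)
    (A : ℂ → ℂ)
    (hA : ∀ z ∈ ball (0 : ℂ) 1, A z = 1 + c * z - z * segInt ω 0 z) :
    (∀ z₁ ∈ ball (0 : ℂ) 1, ∀ z₂ ∈ ball (0 : ℂ) 1,
        (1 - ‖z₁ * z₂‖) * ‖z₁ - z₂‖ ≤ ‖z₁ * A z₂ - z₂ * A z₁‖) ∧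
      (∀ z₁ ∈ ball (0 : ℂ) 1, ∀ z₂ ∈ ball (0 : ℂ) 1,
        z₁ ≠ z₂ → z₁ * A z₂ ≠ z₂ * A z₁) ∧
      Set.InjOn (fun z => z / A z) {z ∈ ball (0 : ℂ) 1 | A z ≠ 0} := by
  have hbound : ∀ z₁ ∈ ball (0 : ℂ) 1, ∀ z₂ ∈ ball (0 : ℂ) 1,
      (1 - ‖z₁ * z₂‖) * ‖z₁ - z₂‖ ≤ ‖z₁ * A z₂ - z₂ * A z₁‖ := by
    intro z₁ hz₁ z₂ hz₂
    have hlip := norm_segInt_sub_segInt_le hω hbd (mem_ball_self one_pos) hz₁ hz₂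
    rw [one_mul, norm_sub_rev z₂] at hlip
    convert mul_norm_sub_le_norm_sub_mul_sub hlip using 2
    rw [hA z₁ hz₁, hA z₂ hz₂]
    ring
  have hne : ∀ z₁ ∈ ball (0 : ℂ) 1, ∀ z₂ ∈ ball (0 : ℂ) 1,
      z₁ ≠ z₂ → z₁ * A z₂ ≠ z₂ * A z₁ := by
    intro z₁ hz₁ z₂ hz₂ hz hA_eq
    have hprod : ‖z₁ * z₂‖ < 1 := by
      rw [mem_ball_zero_iff] at hz₁ hz₂
      rw [norm_mul]
      exact mul_lt_one_of_nonneg_of_lt_one_left (norm_nonneg _) hz₁ hz₂.le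
    have := hbound z₁ hz₁ z₂ hz₂
    rw [hA_eq, sub_self, norm_zero] at this
    exact (mul_pos (sub_pos.2 hprod) (norm_pos_iff.2 (sub_ne_zero.2 hz))).not_ge this
  refine ⟨hbound, hne, fun z₁ hz₁ z₂ hz₂ heq => by_contra fun hz => ?_⟩
  exact hne z₁ hz₁.1 z₂ hz₂.1 hz ((div_eq_div_iff hz₁.2 hz₂.2).1 heq)
end

section
/- Let λ ∈ (0, 1], p ∈ (0, 1], let ω be holomorphic on the open unit disk D with |ω(z)| ≤ 1 for all z ∈ D, let c ∈ ℂ with |c| > (1 + λ·p²)/p, and set A(z) = 1 + c·z − λ·z·∫₀ᶻ ω(t) dt (segment integral). Then, with r = (1 + λ·p²)/(p·|c|) ∈ (0, 1), the function A has a zero z₀ with |z₀| ≤ p·r. (This is the fixed-point argument at the heart of the proof of Theorem 3: a fixed point of F(z) = (1/(−c))·(1 − λ·z·∫₀ᶻ ω(t) dt), which exists by Banach's fixed point theorem, is a zero of A, i.e. a pole of f = z/A.) -/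
/-!
Let `g` be the primitive of `ω` on the unit disc with `g 0 = 0`; by the fundamental theorem of
calculus along segments, `segInt ω 0 = g` there. A zero of `A` is a fixed point of
`F z = (λ z g(z) - 1) / c`. On the closed disc of radius `ρ = (1 + λ p²) / |c| < p` the mean value
bound `|g z| ≤ |z|` gives `|F z| ≤ (1 + λ ρ²) / |c| ≤ ρ`, and `|F' z| = λ |g z + z ω z| / |c|`
is at most `2 λ ρ / |c|`, which is `< 1` because `λ p² ≤ 1`. Banach's fixed point theorem
then produces the zero.
-/

open Complex Metric

open Set

theorem segInt_eq_sub_of_hasDerivAt_s12 {ω g : ℂ → ℂ} {U : Set ℂ} {z₁ z₂ : ℂ} (hU : Convex ℝ U)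
    (h₁ : z₁ ∈ U) (h₂ : z₂ ∈ U) (hg : ∀ z ∈ U, HasDerivAt g (ω z) z) (hω : ContinuousOn ω U) :
    segInt ω z₁ z₂ = g z₂ - g z₁ := by
  have hγ : ∀ t ∈ uIcc (0 : ℝ) 1, z₁ + (t : ℂ) * (z₂ - z₁) ∈ U := fun t ht => by
    rw [uIcc_of_le zero_le_one] at ht
    simpa [Complex.real_smul] using hU.add_smul_sub_mem h₁ h₂ ht
  have hderiv : ∀ t ∈ uIcc (0 : ℝ) 1, HasDerivAt (fun s : ℝ => g (z₁ + (s : ℂ) * (z₂ - z₁)))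
      ((z₂ - z₁) * ω (z₁ + (t : ℂ) * (z₂ - z₁))) t := fun t ht => by
    have hline : HasDerivAt (fun w : ℂ => z₁ + w * (z₂ - z₁)) (z₂ - z₁) t := by
      simpa using ((hasDerivAt_id (t : ℂ)).mul_const (z₂ - z₁)).const_add z₁
    simpa [mul_comm] using ((hg _ (hγ t ht)).comp (t : ℂ) hline).comp_ofReal
  have hint : IntervalIntegrable (fun t : ℝ => (z₂ - z₁) * ω (z₁ + (t : ℂ) * (z₂ - z₁)))
      MeasureTheory.volume 0 1 :=
    (continuousOn_const.mul (hω.comp (by fun_prop) hγ)).intervalIntegrable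
  rw [segInt, ← intervalIntegral.integral_const_mul,
    intervalIntegral.integral_eq_sub_of_hasDerivAt hderiv hint]
  simp

theorem Convex.exists_fixedPoint_of_norm_hasDerivWithin_le {𝕜 : Type*} [RCLike 𝕜]
    {f f' : 𝕜 → 𝕜} {s : Set 𝕜} {C : ℝ} (hs : Convex ℝ s) (hsc : IsClosed s) (hne : s.Nonempty)
    (hmaps : MapsTo f s s) (hf : ∀ x ∈ s, HasDerivWithinAt f (f' x) s x)
    (bound : ∀ x ∈ s, ‖f' x‖ ≤ C) (hC : C < 1) : ∃ x ∈ s, f x = x := by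
  obtain ⟨x₀, hx₀⟩ := hne
  have hlip : LipschitzOnWith C.toNNReal f s :=
    hs.lipschitzOnWith_of_nnnorm_hasDerivWithin_le hf fun x hx =>
      (Real.le_toNNReal_iff_coe_le ((norm_nonneg _).trans (bound x hx))).mpr (bound x hx)
  have hcontr : ContractingWith C.toNNReal (hmaps.restrict f s s) :=
    ⟨by simpa using hC, hlip.mapsToRestrict hmaps⟩
  obtain ⟨x, hx, hfix, -⟩ :=
    hcontr.exists_fixedPoint' hsc.isComplete hmaps hx₀ (edist_ne_top _ _)
  exact ⟨x, hx, hfix⟩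

theorem exists_mem_closedBall_one_add_mul_sub_mul_eq_zero {ω g : ℂ → ℂ} {lam ρ : ℝ} {c : ℂ}
    (hlam : 0 ≤ lam) (hg₀ : g 0 = 0) (hg : ∀ z ∈ closedBall (0 : ℂ) ρ, HasDerivAt g (ω z) z)
    (hω : ∀ z ∈ closedBall (0 : ℂ) ρ, ‖ω z‖ ≤ 1) (hmaps : 1 + lam * ρ ^ 2 ≤ ‖c‖ * ρ)
    (hcontr : 2 * lam * ρ < ‖c‖) :
    ∃ z ∈ closedBall (0 : ℂ) ρ, 1 + c * z - lam * z * g z = 0 := by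
  have hc : 0 < ‖c‖ := by nlinarith [norm_nonneg c]
  have hc₀ : c ≠ 0 := norm_pos_iff.mp hc
  have hρ : 0 < ρ := by nlinarith
  have hg_le : ∀ z ∈ closedBall (0 : ℂ) ρ, ‖g z‖ ≤ ‖z‖ := fun z hz => by
    simpa [hg₀] using (convex_closedBall (0 : ℂ) ρ).norm_image_sub_le_of_norm_hasDerivWithin_le
      (fun w hw => (hg w hw).hasDerivWithinAt) hω (mem_closedBall_self hρ.le) hz
  set F : ℂ → ℂ := fun z => (lam * z * g z - 1) / c
  have hF : ∀ z ∈ closedBall (0 : ℂ) ρ, HasDerivAt F (lam * (g z + z * ω z) / c) z :=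
    fun z hz => by
      simpa [F, mul_add, mul_assoc] using
        ((((hasDerivAt_id z).const_mul (lam : ℂ)).mul (hg z hz)).sub_const 1).div_const c
  have hF_bound : ∀ z ∈ closedBall (0 : ℂ) ρ, ‖lam * (g z + z * ω z) / c‖ ≤ 2 * lam * ρ / ‖c‖ :=
    fun z hz => by
      have hz' : ‖z‖ ≤ ρ := mem_closedBall_zero_iff.mp hz
      have : ‖g z + z * ω z‖ ≤ 2 * ρ := calc
        ‖g z + z * ω z‖ ≤ ‖z‖ + ‖z‖ * 1 := by
          grw [norm_add_le, norm_mul, hg_le z hz, hω z hz]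
        _ ≤ 2 * ρ := by linarith
      rw [norm_div, norm_mul, Complex.norm_real, Real.norm_of_nonneg hlam]
      apply div_le_div_of_nonneg_right _ hc.le
      nlinarith
  have hF_maps : MapsTo F (closedBall 0 ρ) (closedBall 0 ρ) := fun z hz => by
    have hz' : ‖z‖ ≤ ρ := mem_closedBall_zero_iff.mp hz
    have : ‖lam * z * g z - 1‖ ≤ 1 + lam * ρ ^ 2 := calc
      ‖lam * z * g z - 1‖ ≤ lam * ‖z‖ * ‖z‖ + 1 := by
        grw [norm_sub_le, norm_mul, norm_mul, hg_le z hz, Complex.norm_real,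
          Real.norm_of_nonneg hlam, norm_one]
      _ ≤ 1 + lam * ρ ^ 2 := by
        nlinarith [mul_le_mul_of_nonneg_left (mul_le_mul hz' hz' (norm_nonneg z) hρ.le) hlam]
    rw [mem_closedBall_zero_iff, norm_div, div_le_iff₀ hc]
    linarith
  obtain ⟨z, hz, hfix⟩ := (convex_closedBall (0 : ℂ) ρ).exists_fixedPoint_of_norm_hasDerivWithin_le
    isClosed_closedBall (nonempty_closedBall.2 hρ.le) hF_maps
    (fun z hz => (hF z hz).hasDerivWithinAt) hF_bound
    (by rwa [div_lt_one hc])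
  refine ⟨z, hz, ?_⟩
  simp only [F, div_eq_iff hc₀] at hfix
  linear_combination -hfix

theorem two_mul_mul_div_lt_of_div_lt {lam p C : ℝ} (hlam : 0 ≤ lam) (hlp : lam * p ^ 2 ≤ 1)
    (hp : 0 < p) (hC : (1 + lam * p ^ 2) / p < C) : 2 * lam * ((1 + lam * p ^ 2) / C) < C := by
  have hCp : 1 + lam * p ^ 2 < C * p := (div_lt_iff₀ hp).mp hC
  have hC₀ : 0 < C := by nlinarith
  set ρ := (1 + lam * p ^ 2) / C
  have hρ₀ : 0 < ρ := by positivity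
  have hCρ : C * ρ = 1 + lam * p ^ 2 := mul_div_cancel₀ _ hC₀.ne'
  have hρp : ρ < p := by nlinarith
  refine lt_of_mul_lt_mul_left (?_ : p ^ 2 * (2 * lam * ρ) < p ^ 2 * C) (sq_nonneg p)
  calc p ^ 2 * (2 * lam * ρ) = ρ * (2 * lam * p ^ 2) := by ring
    _ ≤ ρ * (C * ρ) := by rw [hCρ]; exact mul_le_mul_of_nonneg_left (by linarith) hρ₀.le
    _ < p ^ 2 * C := by nlinarith [mul_self_lt_mul_self hρ₀.le hρp]

/-- The fixed-point argument of Theorem 3: if `|c| > (1 + λ p²)/p` then, with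
`r = (1 + λ p²)/(p |c|) ∈ (0,1)`, the function
`A(z) = 1 + c z - λ z ∫₀ᶻ ω(t) dt` has a zero `z₀` with `|z₀| ≤ p r`. -/
theorem stmt_12 (lam p : ℝ) (hlam : lam ∈ Set.Ioc (0 : ℝ) 1)
    (hp : p ∈ Set.Ioc (0 : ℝ) 1)
    (ω : ℂ → ℂ) (c : ℂ)
    (hω : DifferentiableOn ℂ ω (ball (0 : ℂ) 1))
    (hbd : ∀ z ∈ ball (0 : ℂ) 1, ‖ω z‖ ≤ 1)
    (hc : (1 + lam * p ^ 2) / p < ‖c‖)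
    (A : ℂ → ℂ)
    (hA : ∀ z ∈ ball (0 : ℂ) 1, A z = 1 + c * z - (lam : ℂ) * z * segInt ω 0 z) :
    (1 + lam * p ^ 2) / (p * ‖c‖) ∈ Set.Ioo (0 : ℝ) 1 ∧
      ∃ z₀ : ℂ, ‖z₀‖ ≤ p * ((1 + lam * p ^ 2) / (p * ‖c‖)) ∧ A z₀ = 0 := by
  obtain ⟨hlam₀, hlam₁⟩ := hlam
  obtain ⟨hp₀, hp₁⟩ := hp
  have hcp : 1 + lam * p ^ 2 < ‖c‖ * p := (div_lt_iff₀ hp₀).mp hc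
  have hc₀ : 0 < ‖c‖ := by nlinarith
  set ρ := (1 + lam * p ^ 2) / ‖c‖ with hρ
  have hcρ : ‖c‖ * ρ = 1 + lam * p ^ 2 := mul_div_cancel₀ _ hc₀.ne'
  have hρ₀ : 0 < ρ := by positivity
  have hρp : ρ < p := by nlinarith
  have hsub : closedBall (0 : ℂ) ρ ⊆ ball 0 1 := closedBall_subset_ball (hρp.trans_le hp₁)
  have hmaps : 1 + lam * ρ ^ 2 ≤ ‖c‖ * ρ := by
    nlinarith [mul_le_mul_of_nonneg_left (pow_le_pow_left₀ hρ₀.le hρp.le 2) hlam₀.le]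
  obtain ⟨g, hg₀, hg⟩ := hω.isExactOn_ball.with_val_at 0 0
  obtain ⟨z₀, hz₀, hAz₀⟩ := exists_mem_closedBall_one_add_mul_sub_mul_eq_zero hlam₀.le hg₀
    (fun z hz => hg z (hsub hz)) (fun z hz => hbd z (hsub hz)) hmaps
    (two_mul_mul_div_lt_of_div_lt hlam₀.le (by nlinarith) hp₀ hc)
  have hpr : p * ((1 + lam * p ^ 2) / (p * ‖c‖)) = ρ := by rw [hρ]; field_simp
  refine ⟨⟨by positivity, ?_⟩, z₀, hpr ▸ mem_closedBall_zero_iff.mp hz₀, ?_⟩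
  · rw [div_lt_one (by positivity)]; linarith
  rw [hA z₀ (hsub hz₀), segInt_eq_sub_of_hasDerivAt_s12 (convex_ball 0 1) (mem_ball_self one_pos)
    (hsub hz₀) hg hω.continuousOn, hg₀, sub_zero, hAz₀]
end
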